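/- Let k ≥ 2 and let t, i, I be integers with t ≥ 1−k, i ≥ 1 and i ≤ I ≤ i+k−1. Then (t+1)·Σ_{h' ∈ H_{I−i, k−1}} κ(t+k−1, k−1, h') + Σ_{h'' ∈ H_{I−i−1, k−1}} κ(t+k−1, k−1, h'') = Σ_{h ∈ H_{I−i, k}} κ(t+k−1, k, h), where a sum over the empty set equals 0. -/

import Mathlib

/-- `H_{ℓ,k}`: tuples `(h₀, …, h_ℓ)` of positive integers with `h₀ + ⋯ + h_ℓ = k`. -/
def Hset (ℓ k : ℕ) : Finset (Fin (ℓ + 1) → ℕ) :=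
  (Fintype.piFinset fun _ : Fin (ℓ + 1) => Finset.Icc 1 k).filter (fun h => ∑ i, h i = k)

/-- `κ(T,k,h) = (T(T-1)⋯(T-k+2)) / ∏_{i=0}^{ℓ-1} (T+1-∑_{j≤i} h_j)`, with the
convention that a factor vanishing in both numerator and denominator is omitted
from both: since the denominator factors are distinct factors of the numerator,
this equals the product of the remaining numerator factors. -/
def kappa (T : ℤ) (k : ℕ) {ℓ : ℕ} (h : Fin (ℓ + 1) → ℕ) : ℤ :=
  ∏ m ∈ Finset.range (k - 1) \
      ((Finset.range ℓ).image fun i =>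
        (∑ j ∈ Finset.univ.filter (fun j : Fin (ℓ + 1) => (j : ℕ) ≤ i), h j) - 1),
    (T - (m : ℤ))

/-!
Split `H_{ℓ,k}` according to the last part `h_ℓ`. If `h_ℓ ≥ 2`, lowering it by one is a
bijection onto `H_{ℓ,k-1}`; the partial sums `h₀ + ⋯ + hᵢ` with `i < ℓ`, hence the denominator
of `κ`, are unchanged, so `κ(T,k,h) = (T-k+2) κ(T,k-1,h')`, and `T-k+2 = t+1` for `T = t+k-1`.
If `h_ℓ = 1`, dropping it is a bijection onto `H_{ℓ-1,k-1}`; the new denominator factor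
`T+1-(k-1)` cancels the extra numerator factor `T-k+2`, so `κ(T,k,h) = κ(T,k-1,h'')`.
-/

open Finset

/-- The indices `m` of the numerator factors `T - m` of `κ(T,k,h)` cancelled by its denominator. -/
def kappaOmitted (ℓ : ℕ) (h : Fin (ℓ + 1) → ℕ) : Finset ℕ :=
  (range ℓ).image fun i => (∑ j ∈ univ.filter (fun j : Fin (ℓ + 1) => (j : ℕ) ≤ i), h j) - 1

lemma kappa_eq_prod_sdiff (T : ℤ) (k : ℕ) {ℓ : ℕ} (h : Fin (ℓ + 1) → ℕ) :
    kappa T k h = ∏ m ∈ range (k - 1) \ kappaOmitted ℓ h, (T - m) :=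
  rfl

lemma mem_Hset {ℓ n : ℕ} {h : Fin (ℓ + 1) → ℕ} :
    h ∈ Hset ℓ n ↔ (∀ j, 1 ≤ h j) ∧ ∑ j, h j = n := by
  simp only [Hset, mem_filter, Fintype.mem_piFinset, mem_Icc]
  refine ⟨fun ⟨hpos, hsum⟩ => ⟨fun j => (hpos j).1, hsum⟩,
    fun ⟨hpos, hsum⟩ => ⟨fun j => ⟨hpos j, ?_⟩, hsum⟩⟩
  exact hsum ▸ single_le_sum (fun _ _ => Nat.zero_le _) (mem_univ j)

lemma update_last_mem_Hset {ℓ n m : ℕ} {h : Fin (ℓ + 1) → ℕ} (hh : h ∈ Hset ℓ n) {v : ℕ}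
    (hv : 1 ≤ v) (hm : n + v = m + h (Fin.last ℓ)) :
    Function.update h (Fin.last ℓ) v ∈ Hset ℓ m := by
  obtain ⟨hpos, hsum⟩ := mem_Hset.mp hh
  refine mem_Hset.mpr ⟨fun j => ?_, ?_⟩
  · rcases eq_or_ne j (Fin.last ℓ) with rfl | hj
    · simpa using hv
    · simpa [Function.update_of_ne hj] using hpos j
  · rw [sum_update_of_mem (mem_univ _)]
    rw [sum_eq_add_sum_sdiff_singleton_of_mem (mem_univ (Fin.last ℓ))] at hsum
    omega

lemma snoc_mem_Hset_iff {ℓ n : ℕ} {g : Fin (ℓ + 1) → ℕ} {a : ℕ} :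
    Fin.snoc g a ∈ Hset (ℓ + 1) n ↔ (∀ j, 1 ≤ g j) ∧ 1 ≤ a ∧ ∑ j, g j + a = n := by
  simp [mem_Hset, Fin.forall_fin_succ', Fin.sum_univ_castSucc, and_assoc]

lemma add_one_lt_sum_of_mem_kappaOmitted {ℓ : ℕ} {h : Fin (ℓ + 1) → ℕ} (hpos : ∀ j, 1 ≤ h j)
    {x : ℕ} (hx : x ∈ kappaOmitted ℓ h) : x + 1 < ∑ j, h j := by
  obtain ⟨i, hi, rfl⟩ := mem_image.mp hx
  set F := univ.filter fun j : Fin (ℓ + 1) => (j : ℕ) ≤ i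
  have hF : 1 ≤ ∑ j ∈ F, h j :=
    (hpos 0).trans (single_le_sum (fun _ _ => Nat.zero_le _) (by simp [F]))
  have hlt : ∑ j ∈ F, h j < ∑ j, h j :=
    sum_lt_sum_of_subset (subset_univ F) (mem_univ (Fin.last ℓ))
      (by simpa [F] using mem_range.mp hi) (hpos _) (fun _ _ _ => Nat.zero_le _)
  omega

lemma kappaOmitted_update_last (ℓ : ℕ) (h : Fin (ℓ + 1) → ℕ) (v : ℕ) :
    kappaOmitted ℓ (Function.update h (Fin.last ℓ) v) = kappaOmitted ℓ h := by
  refine image_congr fun i hi => ?_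
  have hi : i < ℓ := by simpa using hi
  refine congrArg (· - 1) (sum_congr rfl fun j hj => Function.update_of_ne ?_ _ _)
  rintro rfl
  simp only [mem_filter, Fin.val_last] at hj
  omega

lemma sum_filter_le_snoc {ℓ : ℕ} (g : Fin (ℓ + 1) → ℕ) (a i : ℕ) :
    ∑ j ∈ univ.filter (fun j : Fin (ℓ + 2) => (j : ℕ) ≤ i), Fin.snoc g a j
      = (∑ j ∈ univ.filter (fun j : Fin (ℓ + 1) => (j : ℕ) ≤ i), g j)
        + if ℓ + 1 ≤ i then a else 0 := by
  rw [sum_filter, sum_filter, Fin.sum_univ_castSucc]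
  simp [Fin.snoc_castSucc, Fin.snoc_last, Fin.val_last]

lemma kappaOmitted_snoc (ℓ : ℕ) (g : Fin (ℓ + 1) → ℕ) (a : ℕ) :
    kappaOmitted (ℓ + 1) (Fin.snoc g a) = insert ((∑ j, g j) - 1) (kappaOmitted ℓ g) := by
  unfold kappaOmitted
  rw [range_add_one, image_insert, sum_filter_le_snoc, if_neg (by omega),
    filter_true_of_mem fun j _ => Fin.is_le j]
  refine congrArg _ (image_congr fun i hi => ?_)
  have hi : i < ℓ := by simpa using hi
  simp only [sum_filter_le_snoc, if_neg (show ¬ ℓ + 1 ≤ i by omega), add_zero]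

lemma prod_range_add_one_sdiff {M : Type*} [CommMonoid M] (f : ℕ → M) {n : ℕ} {S : Finset ℕ}
    (hS : ∀ x ∈ S, x < n) :
    ∏ m ∈ range (n + 1) \ S, f m = f n * ∏ m ∈ range n \ S, f m := by
  rw [range_add_one, insert_sdiff_of_notMem _ fun hn => (hS n hn).false,
    prod_insert (by simp)]

lemma range_add_one_sdiff_insert_self (n : ℕ) (S : Finset ℕ) :
    range (n + 1) \ insert n S = range n \ S := by
  rw [range_add_one, insert_sdiff_insert, sdiff_insert_of_notMem (by simp)]

lemma kappa_update_last_add_one (T : ℤ) {n ℓ : ℕ} {h : Fin (ℓ + 1) → ℕ}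
    (hh : h ∈ Hset ℓ (n + 1)) :
    kappa T (n + 2) (Function.update h (Fin.last ℓ) (h (Fin.last ℓ) + 1))
      = (T - n) * kappa T (n + 1) h := by
  obtain ⟨hpos, hsum⟩ := mem_Hset.mp hh
  rw [kappa_eq_prod_sdiff, kappa_eq_prod_sdiff, kappaOmitted_update_last]
  exact prod_range_add_one_sdiff _ fun x hx => by
    have := add_one_lt_sum_of_mem_kappaOmitted hpos hx
    omega

lemma kappa_snoc_one (T : ℤ) {n ℓ : ℕ} {g : Fin (ℓ + 1) → ℕ} (hg : ∑ j, g j = n + 1) :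
    kappa T (n + 2) (Fin.snoc g 1) = kappa T (n + 1) g := by
  rw [kappa_eq_prod_sdiff, kappa_eq_prod_sdiff, kappaOmitted_snoc, hg, Nat.add_sub_cancel,
    Nat.add_succ_sub_one, range_add_one_sdiff_insert_self]

lemma sum_kappa_filter_two_le_last (T : ℤ) (n ℓ : ℕ) :
    ∑ h ∈ (Hset ℓ (n + 2)).filter (fun h => 2 ≤ h (Fin.last ℓ)), kappa T (n + 2) h
      = (T - n) * ∑ h ∈ Hset ℓ (n + 1), kappa T (n + 1) h := by
  rw [mul_sum, eq_comm]
  refine sum_nbij' (fun h => Function.update h (Fin.last ℓ) (h (Fin.last ℓ) + 1))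
    (fun h => Function.update h (Fin.last ℓ) (h (Fin.last ℓ) - 1)) (fun h hh => ?_)
    (fun h hh => ?_) (fun h _ => by simp) (fun h hh => ?_)
    (fun h hh => (kappa_update_last_add_one T hh).symm)
  all_goals simp only [mem_filter] at hh ⊢
  · have := (mem_Hset.mp hh).1 (Fin.last ℓ)
    exact ⟨update_last_mem_Hset hh (by omega) (by omega), by rw [Function.update_self]; omega⟩
  · exact update_last_mem_Hset hh.1 (by omega) (by omega)
  · ext j
    rcases eq_or_ne j (Fin.last ℓ) with rfl | hj
    · simp only [Function.update_self]
      omega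
    · simp [Function.update_of_ne hj]

lemma sum_kappa_filter_last_lt_two (T : ℤ) (n ℓ : ℕ) :
    ∑ h ∈ (Hset (ℓ + 1) (n + 2)).filter (fun h => ¬ 2 ≤ h (Fin.last (ℓ + 1))), kappa T (n + 2) h
      = ∑ h ∈ Hset ℓ (n + 1), kappa T (n + 1) h := by
  have snoc_init {h : Fin (ℓ + 2) → ℕ}
      (hh : h ∈ (Hset (ℓ + 1) (n + 2)).filter (fun h => ¬ 2 ≤ h (Fin.last (ℓ + 1)))) :
      Fin.snoc (Fin.init h) 1 = h := by
    rw [mem_filter] at hh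
    have := (mem_Hset.mp hh.1).1 (Fin.last _)
    conv_rhs => rw [← Fin.snoc_init_self h, show h (Fin.last _) = 1 by omega]
  rw [eq_comm]
  refine sum_nbij' (fun g => Fin.snoc g 1) Fin.init (fun g hg => ?_) (fun h hh => ?_)
    (fun g _ => by simp) (fun h hh => snoc_init hh)
    (fun g hg => (kappa_snoc_one T (mem_Hset.mp hg).2).symm)
  · obtain ⟨hpos, hsum⟩ := mem_Hset.mp hg
    simp [snoc_mem_Hset_iff, hpos, hsum]
  · have hmem := (mem_filter.mp hh).1
    rw [← snoc_init hh, snoc_mem_Hset_iff] at hmem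
    exact mem_Hset.mpr ⟨hmem.1, by omega⟩

lemma sum_kappa_Hset_zero (T : ℤ) (n : ℕ) :
    ∑ h ∈ Hset 0 (n + 2), kappa T (n + 2) h
      = (T - n) * ∑ h ∈ Hset 0 (n + 1), kappa T (n + 1) h := by
  rw [← sum_kappa_filter_two_le_last, filter_true_of_mem fun h hh => ?_]
  have hsum := (mem_Hset.mp hh).2
  rw [Fin.sum_univ_one] at hsum
  exact hsum ▸ Nat.le_add_left 2 n

lemma sum_kappa_Hset_succ (T : ℤ) (n ℓ : ℕ) :
    ∑ h ∈ Hset (ℓ + 1) (n + 2), kappa T (n + 2) h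
      = (T - n) * ∑ h ∈ Hset (ℓ + 1) (n + 1), kappa T (n + 1) h
        + ∑ h ∈ Hset ℓ (n + 1), kappa T (n + 1) h := by
  rw [← sum_filter_add_sum_filter_not _ fun h => 2 ≤ h (Fin.last (ℓ + 1)),
    sum_kappa_filter_two_le_last, sum_kappa_filter_last_lt_two]

theorem stmt12_general (k : ℕ) (hk : 2 ≤ k) (t : ℤ) (i I : ℕ) :
    (t + 1) * (∑ h ∈ Hset (I - i) (k - 1), kappa (t + (k : ℤ) - 1) (k - 1) h)
      + (if i < I then ∑ h ∈ Hset (I - i - 1) (k - 1), kappa (t + (k : ℤ) - 1) (k - 1) h else 0)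
      = ∑ h ∈ Hset (I - i) k, kappa (t + (k : ℤ) - 1) k h := by
  obtain ⟨n, rfl⟩ : ∃ n, k = n + 2 := ⟨k - 2, by omega⟩
  have hT : t + ((n + 2 : ℕ) : ℤ) - 1 - n = t + 1 := by push_cast; ring
  rw [Nat.add_succ_sub_one]
  by_cases hiI : i < I
  · obtain ⟨ℓ, hℓ⟩ : ∃ ℓ, I - i = ℓ + 1 := ⟨I - i - 1, by omega⟩
    rw [if_pos hiI, hℓ, Nat.add_sub_cancel, sum_kappa_Hset_succ, hT]
  · rw [if_neg hiI, Nat.sub_eq_zero_of_le (not_lt.mp hiI), add_zero, sum_kappa_Hset_zero, hT]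

/-- Eq. (eqch4) of the paper:
`(t+1) ∑_{h' ∈ H_{I-i,k-1}} κ(t+k-1,k-1,h') + ∑_{h'' ∈ H_{I-i-1,k-1}} κ(t+k-1,k-1,h'')`
`= ∑_{h ∈ H_{I-i,k}} κ(t+k-1,k,h)` (the second sum, over `H_{-1,k-1} = ∅` when
`I = i`, is `0`). -/
theorem stmt12 (k : ℕ) (hk : 2 ≤ k) (t : ℤ) (ht : 1 - (k : ℤ) ≤ t) (i I : ℕ)
    (hi : 1 ≤ i) (hiI : i ≤ I) (hIk : I ≤ i + k - 1) :
    (t + 1) * (∑ h ∈ Hset (I - i) (k - 1), kappa (t + (k : ℤ) - 1) (k - 1) h)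
      + (if i < I then ∑ h ∈ Hset (I - i - 1) (k - 1), kappa (t + (k : ℤ) - 1) (k - 1) h else 0)
      = ∑ h ∈ Hset (I - i) k, kappa (t + (k : ℤ) - 1) k h :=
  stmt12_general k hk t i I
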